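/- arXiv:2507.15494 — 2 statements merged into one kernel-verified Lean document; each statement's English description precedes it below -/
import Mathlib

section
/- If f : A → B is a map of graded commutative dgas, then there is an induced inclusion of cyclic Massey products: f_*(⟨⟨[a_{1,1}],…,[a_{k+ℓ+2,k+ℓ+2}]⟩⟩) ⊆ ⟨⟨[f(a_{1,1})],…,[f(a_{k+ℓ+2,k+ℓ+2})]⟩⟩, where f_* : H(A) → H(B) is the induced map on cohomology. -/
open Finset

namespace CyclicMasseyCDGA

/-- A graded commutative dga over `R`: a `ℤ`-graded ring with graded commutativity
`x·y = (-1)^{|x||y|} y·x`, and a degree `+1` differential satisfying `d² = 0` and the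
graded Leibniz rule. -/
structure GCDGA (R : Type*) [CommRing R] where
  carrier : Type*
  [ring : Ring carrier]
  [alg : Algebra R carrier]
  grading : ℤ → Submodule R carrier
  mul_mem : ∀ {i j : ℤ} {x y : carrier},
    x ∈ grading i → y ∈ grading j → x * y ∈ grading (i + j)
  gcomm : ∀ (i j : ℤ) (x y : carrier), x ∈ grading i → y ∈ grading j →
    x * y = ((Int.negOnePow (i * j) : ℤˣ) : ℤ) • (y * x)
  d : carrier →ₗ[R] carrier
  d_mem : ∀ (i : ℤ) (x : carrier), x ∈ grading i → d x ∈ grading (i + 1)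
  d_sq : ∀ x, d (d x) = 0
  leibniz : ∀ (i : ℤ) (x y : carrier), x ∈ grading i →
    d (x * y) = d x * y + ((Int.negOnePow i : ℤˣ) : ℤ) • (x * d y)

attribute [instance] GCDGA.ring GCDGA.alg

variable {R : Type*} [CommRing R]

/-- The (unshifted) degree of the entry `x_{p,q}` of a triangular system whose diagonal
degrees are `da`: `|x_{p,q}| = da p + ⋯ + da q - (q - p)`. -/
def degOf (da : ℕ → ℤ) (p q : ℕ) : ℤ := (∑ t ∈ Icc p q, da t) - ((q : ℤ) - (p : ℤ))

/-- The staircase product of a triangular system in a graded commutative dga: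
`S^{p,q}{x} = -∑_{m=p}^{q-1} (-1)^{|x_{p,m}|} x_{p,m} · x_{m+1,q}`. -/
def cStair (D : GCDGA R) (da : ℕ → ℤ) (x : ℕ → ℕ → D.carrier) (p q : ℕ) : D.carrier :=
  -∑ m ∈ Ico p q, ((Int.negOnePow (degOf da p m) : ℤˣ) : ℤ) • (x p m * x (m + 1) q)

/-- The cyclic rotation of the index set `[1, k+ℓ+2]` taking the `x'`-position `t` to the
corresponding original position of the sequence `(a_{k+2}, …, a_{k+ℓ+2}, a_1, …, a_k)`. -/
def rotIdx (k l t : ℕ) : ℕ := if t ≤ l + 1 then k + 1 + t else t - (l + 1)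

/-- All entries of the triangular system `x` on `[1,n]` are homogeneous of the prescribed
degrees. -/
def IsHomogSystem (D : GCDGA R) (da : ℕ → ℤ) (n : ℕ) (x : ℕ → ℕ → D.carrier) : Prop :=
  ∀ i j, 1 ≤ i → i ≤ j → j ≤ n → x i j ∈ D.grading (degOf da i j)

/-- A cyclic defining system for `(a 1, …, a (k+ℓ+2)) ∈ A^{k+ℓ+2}` (homogeneous of
degrees `da`): two triangular systems `x` (for `(a 1, …, a (k+ℓ+1))`) and the cyclically
rotated `x'` (for `(a (k+2), …, a (k+ℓ+2), a 1, …, a k)`), both including their top-left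
corner entries, agreeing on common entries, each satisfying the full defining equations
`d(x_{i,j}) = -S^{i,j}{x}`. -/
def IsCyclicDefiningSystem (D : GCDGA R) (da : ℕ → ℤ) (k l : ℕ)
    (a : ℕ → D.carrier) (x x' : ℕ → ℕ → D.carrier) : Prop :=
  (∀ i, 1 ≤ i → i ≤ k + l + 2 → a i ∈ D.grading (da i)) ∧
  IsHomogSystem D da (k + l + 1) x ∧
  IsHomogSystem D (fun t => da (rotIdx k l t)) (k + l + 1) x' ∧
  (∀ i, 1 ≤ i → i ≤ k + l + 1 → x i i = a i) ∧
  (∀ t, 1 ≤ t → t ≤ k + l + 1 → x' t t = a (rotIdx k l t)) ∧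
  (∀ i j, 1 ≤ i → i ≤ j → j ≤ k → x i j = x' (i + l + 1) (j + l + 1)) ∧
  (∀ i j, k + 2 ≤ i → i ≤ j → j ≤ k + l + 1 → x i j = x' (i - (k + 1)) (j - (k + 1))) ∧
  (∀ i j, 1 ≤ i → i ≤ j → j ≤ k + l + 1 → D.d (x i j) = -cStair D da x i j) ∧
  (∀ i j, 1 ≤ i → i ≤ j → j ≤ k + l + 1 →
    D.d (x' i j) = -cStair D (fun t => da (rotIdx k l t)) x' i j)

/-- The Koszul sign exponent `ε_i = 1 + (|x̲_1| + ⋯ + |x̲_{i-1}|)(|x̲_i| + ⋯ + |x̲_N|)`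
(shifted degrees `|x̲_t| = da t - 1`). -/
def epsExp (da : ℕ → ℤ) (N i : ℕ) : ℤ :=
  1 + (∑ t ∈ Icc 1 (i - 1), (da t - 1)) * (∑ t ∈ Icc i N, (da t - 1))

/-- The cyclic staircase product
`C({x},{x'}) = ∑_{1 ≤ i ≤ k+1 ≤ j ≤ k+ℓ+1} (-1)^{|x_{i,j}| + ε_i} x_{i,j} · x'_{j+1,i-1}`
(with `x'_{j+1,i-1}` the cyclic-interval entry, read in the rotated coordinates). -/
def cyclicC (D : GCDGA R) (da : ℕ → ℤ) (k l : ℕ) (x x' : ℕ → ℕ → D.carrier) : D.carrier :=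
  ∑ i ∈ Icc 1 (k + 1), ∑ j ∈ Icc (k + 1) (k + l + 1),
    ((Int.negOnePow (degOf da i j + epsExp da (k + l + 2) i) : ℤˣ) : ℤ) •
      (x i j * x' (j + 1 - (k + 1)) (if i = 1 then l + 1 else i + l))

/-- Representatives of the `(k,ℓ)`-th cyclic Massey product `⟨⟨a 1, …, a (k+ℓ+2)⟩⟩`:
all cyclic staircase products of cyclic defining systems for `(a 1, …, a (k+ℓ+2))`. -/
def cMasseyRep (D : GCDGA R) (da : ℕ → ℤ) (k l : ℕ) (a : ℕ → D.carrier) :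
    Set D.carrier :=
  {w | ∃ x x', IsCyclicDefiningSystem D da k l a x x' ∧ w = cyclicC D da k l x x'}

end CyclicMasseyCDGA

namespace CyclicMasseyCDGA

/-- A map of graded commutative dgas: an `R`-linear, multiplicative, grading-preserving
chain map. -/
structure GCDGAHom {R : Type*} [CommRing R] (D E : GCDGA R) where
  toLin : D.carrier →ₗ[R] E.carrier
  map_mul : ∀ x y, toLin (x * y) = toLin x * toLin y
  map_grading : ∀ (i : ℤ) (x : D.carrier), x ∈ D.grading i → toLin x ∈ E.grading i
  map_d : ∀ x, toLin (D.d x) = E.d (toLin x)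

end CyclicMasseyCDGA

namespace CyclicMasseyCDGA

lemma map_cStair {R : Type*} [CommRing R] (D E : GCDGA R) (f : GCDGAHom D E)
    (da : ℕ → ℤ) (x : ℕ → ℕ → D.carrier) (p q : ℕ) :
    f.toLin (cStair D da x p q) =
      cStair E da (fun i j => f.toLin (x i j)) p q := by
  unfold cStair
  rw [map_neg, map_sum]
  congr 1
  refine Finset.sum_congr rfl fun m _ => ?_
  rw [map_zsmul, f.map_mul]

lemma map_cyclicC {R : Type*} [CommRing R] (D E : GCDGA R) (f : GCDGAHom D E)
    (da : ℕ → ℤ) (k l : ℕ) (x x' : ℕ → ℕ → D.carrier) :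
    f.toLin (cyclicC D da k l x x') =
      cyclicC E da k l (fun i j => f.toLin (x i j)) (fun i j => f.toLin (x' i j)) := by
  unfold cyclicC
  rw [map_sum]
  refine Finset.sum_congr rfl fun i _ => ?_
  rw [map_sum]
  refine Finset.sum_congr rfl fun j _ => ?_
  rw [map_zsmul, f.map_mul]

/-- If `f : A → B` is a map of graded commutative dgas, then there is an
induced inclusion of cyclic Massey products:
`f_*(⟨⟨[a 1],…,[a (k+ℓ+2)]⟩⟩) ⊆ ⟨⟨[f(a 1)],…,[f(a (k+ℓ+2))]⟩⟩`; i.e. the image under `f`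
of every representative of the cyclic Massey product of the `a i` is cohomologous to a
representative of the cyclic Massey product of the `f(a i)`. -/
theorem cyclicMassey_naturality
    {R : Type*} [CommRing R] (D E : GCDGA R) (f : GCDGAHom D E)
    (da : ℕ → ℤ) (k l : ℕ) (a : ℕ → D.carrier) :
    ∀ w ∈ cMasseyRep D da k l a,
      ∃ w' ∈ cMasseyRep E da k l (fun i => f.toLin (a i)),
        ∃ z, f.toLin w - w' = E.d z := by
  rintro w ⟨x, x', ⟨ha, hx, hx', hdiag, hdiag', hc1, hc2, hd, hd'⟩, rfl⟩
  refine ⟨cyclicC E da k l (fun i j => f.toLin (x i j)) (fun i j => f.toLin (x' i j)),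
    ⟨fun i j => f.toLin (x i j), fun i j => f.toLin (x' i j),
      ⟨fun i h1 h2 => f.map_grading _ _ (ha i h1 h2),
       fun i j h1 h2 h3 => f.map_grading _ _ (hx i j h1 h2 h3),
       fun i j h1 h2 h3 => f.map_grading _ _ (hx' i j h1 h2 h3),
       fun i h1 h2 => by dsimp only; rw [hdiag i h1 h2],
       fun t h1 h2 => by dsimp only; rw [hdiag' t h1 h2],
       fun i j h1 h2 h3 => by dsimp only; rw [hc1 i j h1 h2 h3],
       fun i j h1 h2 h3 => by dsimp only; rw [hc2 i j h1 h2 h3],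
       fun i j h1 h2 h3 => by
         dsimp only; rw [← f.map_d, hd i j h1 h2 h3, map_neg, map_cStair],
       fun i j h1 h2 h3 => by
         dsimp only; rw [← f.map_d, hd' i j h1 h2 h3, map_neg, map_cStair]⟩, rfl⟩, 0, ?_⟩
  rw [map_cyclicC D E f, sub_self, map_zero]

end CyclicMasseyCDGA
end

section
/- Let f : A → B be a map of graded commutative dgas and y ∈ B* a closed element of the dual, so f*(y) ∈ A* is closed. Then for all cohomology classes [a_{1,1}],…,[a_{k+ℓ+2,k+ℓ+2}] ∈ H(A) there is an inclusion of Massey inner product sets ⟨[a_{1,1}],…,[a_{k+ℓ+2,k+ℓ+2}]⟩_{f*(y)} ⊆ ⟨[f(a_{1,1})],…,[f(a_{k+ℓ+2,k+ℓ+2})]⟩_y in R, where for a closed x ∈ A* the Massey inner product ⟨…⟩_x is the composition of the evaluation map ev_x : H(A) → R, [a] ↦ x(a), with the cyclic Massey product ⟨⟨…⟩⟩. -/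
open Finset

namespace CyclicMasseyCDGA

/-- The Massey inner product `⟨…⟩_x` of a closed dual element `x ∈ A^*`: the composition
of the evaluation `ev_x : H(A) → R`, `[a] ↦ x(a)`, with the cyclic Massey product. -/
def cMasseyIP {R : Type*} [CommRing R] (D : GCDGA R) (x : D.carrier →ₗ[R] R)
    (da : ℕ → ℤ) (k l : ℕ) (a : ℕ → D.carrier) : Set R :=
  (fun w => x w) '' cMasseyRep D da k l a

/-- Let `f : A → B` be a map of graded commutative dgas and `y ∈ B^*`
a closed element of the dual, so that `f^*(y) = y ∘ f ∈ A^*` is closed.  Then for all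
cohomology classes `[a 1], …, [a (k+ℓ+2)] ∈ H(A)` there is an inclusion of Massey inner
product sets `⟨[a 1],…,[a (k+ℓ+2)]⟩_{f^*(y)} ⊆ ⟨[f(a 1)],…,[f(a (k+ℓ+2))]⟩_y` in `R`. -/
theorem masseyIP_pullback_inclusion
    {R : Type*} [CommRing R] (D E : GCDGA R) (f : GCDGAHom D E)
    (y : E.carrier →ₗ[R] R) (hy : ∀ b, y (E.d b) = 0)
    (da : ℕ → ℤ) (k l : ℕ) (a : ℕ → D.carrier) :
    cMasseyIP D (y.comp f.toLin) da k l a ⊆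
      cMasseyIP E y da k l (fun i => f.toLin (a i)) := by
  rintro r ⟨w, ⟨x, x', ⟨h1, h2, h3, h4, h5, h6, h7, h8, h9⟩, rfl⟩, rfl⟩
  refine ⟨f.toLin (cyclicC D da k l x x'),
    ⟨fun i j => f.toLin (x i j), fun i j => f.toLin (x' i j),
      ⟨fun i hi hi' => f.map_grading _ _ (h1 i hi hi'),
       fun i j hi hij hj => f.map_grading _ _ (h2 i j hi hij hj),
       fun i j hi hij hj => f.map_grading _ _ (h3 i j hi hij hj),
       fun i hi hi' => by dsimp only; rw [h4 i hi hi'],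
       fun t ht ht' => by dsimp only; rw [h5 t ht ht'],
       fun i j hi hij hj => by dsimp only; rw [h6 i j hi hij hj],
       fun i j hi hij hj => by dsimp only; rw [h7 i j hi hij hj],
       fun i j hi hij hj => by
         dsimp only; rw [← f.map_d, h8 i j hi hij hj, map_neg, map_cStair],
       fun i j hi hij hj => by
         dsimp only; rw [← f.map_d, h9 i j hi hij hj, map_neg, map_cStair]⟩,
      map_cyclicC D E f da k l x x'⟩, rfl⟩

end CyclicMasseyCDGA
end
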